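/- Let G be a Fischer space of symplectic type (finite point set) and A its nilpotent Matsuo algebra over a field of characteristic 2. For each line ℓ, A decomposes into eigenspaces A = A₀^ℓ ⊕ A₁^ℓ of ad_{s_ℓ} with eigenvalues 0 and 1, and these decompositions satisfy the Z/2Z-graded fusion law: A₀^ℓ·A₀^ℓ ⊆ A₀^ℓ, A₀^ℓ·A₁^ℓ ⊆ A₁^ℓ, A₁^ℓ·A₁^ℓ ⊆ A₀^ℓ. -/

import Mathlib

/-- A partial triple system, given by a collinearity relation `col` and a map `third`
sending two distinct collinear points to the third point on their line. -/
structure IsPTS {P : Type*} (col : P → P → Prop) (third : P → P → P) : Prop where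
  symm : ∀ x y, col x y → col y x
  irrefl : ∀ x, ¬ col x x
  third_symm : ∀ x y, col x y → third x y = third y x
  col_third : ∀ x y, col x y → col x (third x y)
  third_ne_left : ∀ x y, col x y → third x y ≠ x
  third_ne_right : ∀ x y, col x y → third x y ≠ y
  third_third : ∀ x y, col x y → third x (third x y) = y
  unique_line : ∀ x y u v, col x y → col u v →
    x ∈ ({u, v, third u v} : Set P) → y ∈ ({u, v, third u v} : Set P) →
    ({x, y, third x y} : Set P) = {u, v, third u v}

/-- A subspace of a partial triple system: a set of points closed under taking
the third point of a line through two of its points. -/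
def IsSubspace {P : Type*} (col : P → P → Prop) (third : P → P → P) (S : Set P) : Prop :=
  ∀ x ∈ S, ∀ y ∈ S, col x y → third x y ∈ S

/-- The subspace generated by a set of points. -/
def fclosure {P : Type*} (col : P → P → Prop) (third : P → P → P) (T : Set P) : Set P :=
  ⋂₀ {S | T ⊆ S ∧ IsSubspace col third S}

/-- The line through two distinct collinear points, as a set. -/
def lineSet {P : Type*} (third : P → P → P) (x y : P) : Set P := {x, y, third x y}

/-- The six points of the complete quadrilateral (dual affine plane of order 2). -/
inductive CQPt | A | B | C | X | Y | Z
deriving DecidableEq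

/-- The "opposite point" involution of the complete quadrilateral. -/
def CQPt.opp : CQPt → CQPt
  | .A => .X | .X => .A | .B => .Y | .Y => .B | .C => .Z | .Z => .C

/-- Collinearity in the complete quadrilateral with lines
{A,B,C}, {A,Y,Z}, {B,X,Z}, {C,X,Y}: two points are collinear iff they are
distinct and not opposite. -/
def CQPt.col (p q : CQPt) : Prop := p ≠ q ∧ q ≠ p.opp

/-- The third point on the line through two distinct collinear points of the
complete quadrilateral. -/
def CQPt.third : CQPt → CQPt → CQPt
  | .A, .B => .C | .B, .A => .C | .A, .C => .B | .C, .A => .B | .B, .C => .A | .C, .B => .A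
  | .A, .Y => .Z | .Y, .A => .Z | .A, .Z => .Y | .Z, .A => .Y | .Y, .Z => .A | .Z, .Y => .A
  | .B, .X => .Z | .X, .B => .Z | .B, .Z => .X | .Z, .B => .X | .X, .Z => .B | .Z, .X => .B
  | .C, .X => .Y | .X, .C => .Y | .C, .Y => .X | .Y, .C => .X | .X, .Y => .C | .Y, .X => .C
  | p, _ => p

/-- A set of points is a complete quadrilateral if it is the isomorphic image of
the standard one (preserving collinearity and the `third` operation). -/
def IsCQSet {P : Type*} (col : P → P → Prop) (third : P → P → P) (S : Set P) : Prop :=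
  ∃ f : CQPt → P, Function.Injective f ∧ Set.range f = S ∧
    (∀ u v, col (f u) (f v) ↔ CQPt.col u v) ∧
    (∀ u v, CQPt.col u v → f (CQPt.third u v) = third (f u) (f v))

/-- A set of points is an affine plane of order 3 if it is the isomorphic image of
`AG(2,3)` (any two distinct points collinear, third point `-(u+v)`). -/
def IsAPSet {P : Type*} (col : P → P → Prop) (third : P → P → P) (S : Set P) : Prop :=
  ∃ f : ZMod 3 × ZMod 3 → P, Function.Injective f ∧ Set.range f = S ∧
    (∀ u v, col (f u) (f v) ↔ u ≠ v) ∧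
    (∀ u v, u ≠ v → f (-(u + v)) = third (f u) (f v))

/-- A Fischer space: a partial triple system in which the subspace generated by two
distinct intersecting lines is a complete quadrilateral or an affine plane of order 3. -/
structure IsFischer {P : Type*} (col : P → P → Prop) (third : P → P → P)
    extends IsPTS col third : Prop where
  dichotomy : ∀ x y u v, col x y → col u v →
    lineSet third x y ≠ lineSet third u v →
    (lineSet third x y ∩ lineSet third u v).Nonempty →
    IsCQSet col third (fclosure col third (lineSet third x y ∪ lineSet third u v)) ∨
    IsAPSet col third (fclosure col third (lineSet third x y ∪ lineSet third u v))

/-- A Fischer space of symplectic type: the subspace generated by two distinct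
intersecting lines is always a complete quadrilateral. -/
structure IsSymplectic {P : Type*} (col : P → P → Prop) (third : P → P → P)
    extends IsPTS col third : Prop where
  cq : ∀ x y u v, col x y → col u v →
    lineSet third x y ≠ lineSet third u v →
    (lineSet third x y ∩ lineSet third u v).Nonempty →
    IsCQSet col third (fclosure col third (lineSet third x y ∪ lineSet third u v))

/-- `A` is the nilpotent Matsuo algebra (char 2) of the geometry `(col, third)`,
with `e` the natural basis indexed by the points. -/
structure IsNilMatsuo (R : Type*) {A P : Type*} [CommRing R] [NonUnitalNonAssocCommRing A]
    [Module R A] (col : P → P → Prop) (third : P → P → P) (e : P → A) : Prop where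
  char2 : (2 : R) = 0
  mul_same : ∀ p, e p * e p = 0
  mul_of_not_col : ∀ p q, p ≠ q → ¬ col p q → e p * e q = 0
  mul_of_col : ∀ p q, p ≠ q → col p q → e p * e q = e p + e q + e (third p q)

/-!
For a line `ℓ = {p, q, r}` put `s = e p + e q + e r`. Two facts about `ad s` suffice: it is
idempotent, so `A` is the direct sum of its 0- and 1-eigenspaces, and it is a derivation, so
the product of eigenvectors for `a` and `b` is an eigenvector for `a + b`; in characteristic 2
this is exactly the `ℤ/2ℤ`-graded fusion law. Being a derivation follows from the Jacobi
identity on basis vectors. Both the Jacobi identity and idempotence only involve a line and one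
more point `z`: either `z` lies on the line, or `z` is collinear with no point of it (and all
products vanish), or the line and `z` lie in a complete quadrilateral, where both identities are
checked by direct computation.
-/

section CharTwo
variable {A : Type*} [AddCommGroup A]

/-- The `AtLeastTwo` instance keeps `simp` from looping on the reduced coefficients `0` and `1`. -/
theorem ofNat_zsmul_eq_emod_two (h2 : ∀ x : A, x + x = 0) (n : ℕ) [n.AtLeastTwo] (x : A) :
    (OfNat.ofNat n : ℤ) • x = ((OfNat.ofNat n : ℤ) % 2) • x := by
  conv_lhs => rw [← Int.emod_add_mul_ediv (OfNat.ofNat n : ℤ) 2]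
  rw [add_smul, mul_comm, mul_smul, two_smul, h2, smul_zero, add_zero]

end CharTwo

section Jacobiator
variable {A : Type*} [NonUnitalNonAssocCommRing A]

def jacobiator (x y z : A) : A := x * (y * z) + y * (z * x) + z * (x * y)

theorem jacobiator_rotate (x y z : A) : jacobiator x y z = jacobiator y z x := by
  unfold jacobiator; abel

theorem jacobiator_self_left (h2 : ∀ x : A, x + x = 0) {x : A} (hx : x * x = 0) (y : A) :
    jacobiator x x y = 0 := by
  rw [jacobiator, hx, mul_zero, add_zero, mul_comm y x, h2]

theorem mul_mul_eq_of_jacobiator_eq_zero (h2 : ∀ x : A, x + x = 0) {x y z : A}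
    (h : jacobiator x y z = 0) : x * (y * z) = x * y * z + y * (x * z) := by
  rw [jacobiator, add_assoc, add_eq_zero_iff_eq_neg, neg_eq_of_add_eq_zero_left (h2 _)] at h
  rw [h, mul_comm z x, mul_comm z (x * y), add_comm]

end Jacobiator

section Eigenspaces
open Module End

theorem isCompl_eigenspace_zero_one {k M : Type*} [CommRing k] [AddCommGroup M] [Module k M]
    {f : End k M} (hf : IsIdempotentElem f) :
    IsCompl (f.eigenspace 0) (f.eigenspace 1) := by
  have h1 : f.eigenspace 1 = LinearMap.range f := by
    ext x; rw [mem_eigenspace_iff, one_smul, LinearMap.IsIdempotentElem.mem_range_iff hf]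
  rw [eigenspace_zero, h1]
  exact (LinearMap.IsIdempotentElem.isCompl hf).symm

variable {k A : Type*} [CommRing k] [NonUnitalNonAssocRing A] [Module k A]
  [IsScalarTower k A A] [SMulCommClass k A A]

theorem Module.Basis.mul_mul_eq_add_of_forall {ι : Type*} (e : Basis ι k A) (x : A)
    (h : ∀ i j, x * (e i * e j) = x * e i * e j + e i * (x * e j)) (y z : A) :
    x * (y * z) = x * y * z + y * (x * z) := by
  have key : (LinearMap.mul k A).compr₂ (LinearMap.mulLeft k x) =
      (LinearMap.mul k A).comp (LinearMap.mulLeft k x) +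
        (LinearMap.mul k A).compl₂ (LinearMap.mulLeft k x) :=
    LinearMap.ext_basis e e h
  exact LinearMap.congr_fun₂ key y z

theorem mul_mem_eigenspace_add_of_derivation {D : End k A}
    (hD : ∀ x y, D (x * y) = D x * y + x * D y) {a b : k} {u v : A}
    (hu : u ∈ D.eigenspace a) (hv : v ∈ D.eigenspace b) : u * v ∈ D.eigenspace (a + b) := by
  rw [mem_eigenspace_iff] at hu hv ⊢
  rw [hD, hu, hv, smul_mul_assoc, mul_smul_comm, add_smul]

end Eigenspaces

namespace IsPTS
variable {P : Type*} {col : P → P → Prop} {third : P → P → P} (hP : IsPTS col third)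
  {x y : P}
include hP

theorem ne_of_col (h : col x y) : x ≠ y := fun hxy => hP.irrefl x (hxy ▸ h)

theorem col_third_right (h : col x y) : col y (third x y) := by
  simpa only [← hP.third_symm x y h] using hP.col_third y x (hP.symm x y h)

theorem third_third_right (h : col x y) : third y (third x y) = x := by
  simpa only [← hP.third_symm x y h] using hP.third_third y x (hP.symm x y h)

end IsPTS

def IsCQEmbedding {P : Type*} (col : P → P → Prop) (third : P → P → P) (f : CQPt → P) :
    Prop :=
  Function.Injective f ∧ (∀ u v, col (f u) (f v) ↔ CQPt.col u v) ∧
    ∀ u v, CQPt.col u v → f (CQPt.third u v) = third (f u) (f v)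

theorem subset_fclosure {P : Type*} (col : P → P → Prop) (third : P → P → P) (T : Set P) :
    T ⊆ fclosure col third T :=
  fun _ hx => Set.mem_sInter.2 fun _ hS => hS.1 hx

theorem IsSymplectic.line_trichotomy {P : Type*} {col : P → P → Prop} {third : P → P → P}
    (hS : IsSymplectic col third) {x y : P} (hxy : col x y) (z : P) :
    z ∈ lineSet third x y ∨
      (∃ f, IsCQEmbedding col third f ∧ ∃ a b c, f a = x ∧ f b = y ∧ f c = z) ∨
      ∀ w ∈ lineSet third x y, ¬ col z w := by
  by_cases hz : z ∈ lineSet third x y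
  · exact Or.inl hz
  refine Or.inr (or_iff_not_imp_right.2 fun hcol => ?_)
  push Not at hcol
  obtain ⟨w, hw, hzw⟩ := hcol
  have hwz := hS.symm z w hzw
  have hz' : z ∈ lineSet third w z := Or.inr (Or.inl rfl)
  obtain ⟨f, hinj, hrange, hcol, hthird⟩ :=
    hS.cq x y w z hxy hwz (fun h => hz (h ▸ hz')) ⟨w, hw, Or.inl rfl⟩
  have hsub : lineSet third x y ∪ lineSet third w z ⊆ Set.range f :=
    hrange ▸ subset_fclosure col third _
  obtain ⟨a, rfl⟩ := hsub (Or.inl (Or.inl rfl))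
  obtain ⟨b, rfl⟩ := hsub (Or.inl (Or.inr (Or.inl rfl)))
  obtain ⟨c, rfl⟩ := hsub (Or.inr (Or.inr (Or.inl rfl)))
  exact ⟨f, ⟨hinj, hcol, hthird⟩, a, b, c, rfl, rfl, rfl⟩

instance : DecidableRel CQPt.col := fun p q => inferInstanceAs (Decidable (p ≠ q ∧ q ≠ p.opp))

def lineSum {A P : Type*} [Add A] (e : P → A) (third : P → P → P) (x y : P) : A :=
  e x + e y + e (third x y)

namespace IsNilMatsuo
variable {k A : Type*} [CommRing k] [NonUnitalNonAssocCommRing A] [Module k A]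

section General
variable {P : Type*} {col : P → P → Prop} {third : P → P → P} {e : P → A}

theorem add_self (hM : IsNilMatsuo k col third e) (x : A) : x + x = 0 := by
  rw [← two_smul k x, hM.char2, zero_smul]

theorem mul_eq_zero_of_not_col (hM : IsNilMatsuo k col third e) {x y : P} (h : ¬ col x y) :
    e x * e y = 0 := by
  obtain rfl | hxy := eq_or_ne x y
  · exact hM.mul_same x
  · exact hM.mul_of_not_col x y hxy h

theorem mul_lineSum_of_forall_not_col (hM : IsNilMatsuo k col third e) {x y z : P}
    (hz : ∀ w ∈ lineSet third x y, ¬ col z w) : e z * lineSum e third x y = 0 := by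
  rw [lineSum, mul_add, mul_add, hM.mul_eq_zero_of_not_col (hz _ (Or.inl rfl)),
    hM.mul_eq_zero_of_not_col (hz _ (Or.inr (Or.inl rfl))),
    hM.mul_eq_zero_of_not_col (hz _ (Or.inr (Or.inr rfl))), add_zero, add_zero]

theorem comp_cqEmbedding (hM : IsNilMatsuo k col third e) {f : CQPt → P}
    (hf : IsCQEmbedding col third f) : IsNilMatsuo k CQPt.col CQPt.third (e ∘ f) where
  char2 := hM.char2
  mul_same u := hM.mul_same (f u)
  mul_of_not_col u v huv h := hM.mul_of_not_col _ _ (hf.1.ne huv) (mt (hf.2.1 u v).1 h)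
  mul_of_col u v huv h := by
    simp only [Function.comp_apply, hf.2.2 u v h]
    exact hM.mul_of_col _ _ (hf.1.ne huv) ((hf.2.1 u v).2 h)

section Line
variable (hP : IsPTS col third) (hM : IsNilMatsuo k col third e) {x y : P}
include hP hM

theorem mul_eq_lineSum (h : col x y) : e x * e y = lineSum e third x y :=
  hM.mul_of_col x y (hP.ne_of_col h) h

omit hM in
theorem lineSum_rotate (h : col x y) :
    lineSum e third y (third x y) = lineSum e third x y := by
  rw [lineSum, lineSum, hP.third_third_right h]
  exact (add_rotate _ _ _).symm

theorem mul_lineSum_self (h : col x y) : e x * lineSum e third x y = 0 := by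
  have hxr : col x (third x y) := hP.col_third x y h
  have hr : lineSum e third x (third x y) = lineSum e third x y := by
    rw [lineSum, lineSum, hP.third_third x y h, add_right_comm]
  calc e x * lineSum e third x y = e x * e x + e x * e y + e x * e (third x y) := by
        rw [lineSum, mul_add, mul_add]
    _ = 0 + lineSum e third x y + lineSum e third x y := by
        rw [hM.mul_same, hM.mul_eq_lineSum hP h, hM.mul_eq_lineSum hP hxr, hr]
    _ = 0 := by rw [zero_add, hM.add_self]

theorem mul_lineSum_of_mem (h : col x y) {w : P} (hw : w ∈ lineSet third x y) :
    e w * lineSum e third x y = 0 := by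
  have hyr := hP.col_third_right h
  rcases hw with rfl | rfl | rfl
  · exact hM.mul_lineSum_self hP h
  · rw [← lineSum_rotate hP h]
    exact hM.mul_lineSum_self hP hyr
  · rw [← lineSum_rotate hP h, ← lineSum_rotate hP hyr]
    exact hM.mul_lineSum_self hP (hP.col_third_right hyr)

theorem jacobiator_line (h : col x y) :
    jacobiator (e x) (e y) (e (third x y)) = 0 := by
  have hyr := hP.col_third_right h
  have hrx := hP.col_third_right hyr
  have hsum := lineSum_rotate (e := e) hP hyr
  rw [hP.third_third_right h] at hrx hsum
  rw [jacobiator, hM.mul_eq_lineSum hP hyr, hM.mul_eq_lineSum hP hrx, hM.mul_eq_lineSum hP h,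
    hsum, lineSum_rotate hP h, hM.mul_lineSum_of_mem hP h (Or.inl rfl),
    hM.mul_lineSum_of_mem hP h (Or.inr (Or.inl rfl)),
    hM.mul_lineSum_of_mem hP h (Or.inr (Or.inr rfl)), add_zero, add_zero]

end Line

end General

section CompleteQuadrilateral
variable {E : CQPt → A} (hE : IsNilMatsuo k CQPt.col CQPt.third E)
include hE

theorem cq_mul_eq_ite (u v : CQPt) :
    E u * E v = if CQPt.col u v then E u + E v + E (CQPt.third u v) else 0 := by
  split_ifs with h
  · exact hE.mul_of_col u v h.1 h
  · exact hE.mul_eq_zero_of_not_col h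

theorem cq_jacobiator (u v w : CQPt) : jacobiator (E u) (E v) (E w) = 0 := by
  have h2 := hE.add_self
  cases u <;> cases v <;> cases w <;>
    simp +decide only [jacobiator, hE.cq_mul_eq_ite, CQPt.third, mul_add, mul_zero, add_zero,
      zero_add, if_true, if_false] <;>
    abel_nf <;> simp only [ofNat_zsmul_eq_emod_two h2, Int.reduceMod, zero_smul, add_zero]

theorem cq_lineSum_mul_lineSum_mul {u v : CQPt} (huv : CQPt.col u v) (w : CQPt) :
    lineSum E CQPt.third u v * (lineSum E CQPt.third u v * E w) =
      lineSum E CQPt.third u v * E w := by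
  have h2 := hE.add_self
  rw [← sub_eq_zero]
  revert huv
  cases u <;> cases v <;> cases w <;>
    simp +decide only [lineSum, hE.cq_mul_eq_ite, CQPt.third, mul_add, add_mul, mul_zero,
      add_zero, zero_add, if_true, if_false, IsEmpty.forall_iff, forall_const] <;>
    abel_nf <;> simp only [ofNat_zsmul_eq_emod_two h2, Int.reduceMod, zero_smul, add_zero]

end CompleteQuadrilateral

section Symplectic
variable {P : Type*} {col : P → P → Prop} {third : P → P → P} {e : P → A}
  (hS : IsSymplectic col third) (hM : IsNilMatsuo k col third e)
include hS hM

theorem jacobiator_of_col {a b : P} (hab : col a b) (c : P) :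
    jacobiator (e a) (e b) (e c) = 0 := by
  rcases hS.line_trichotomy hab c with
    (rfl | rfl | rfl) | ⟨f, hf, a', b', c', rfl, rfl, rfl⟩ | hc
  · rw [← jacobiator_rotate, jacobiator_self_left hM.add_self (hM.mul_same _)]
  · rw [jacobiator_rotate, jacobiator_self_left hM.add_self (hM.mul_same _)]
  · exact hM.jacobiator_line hS.toIsPTS hab
  · exact (hM.comp_cqEmbedding hf).cq_jacobiator a' b' c'
  · rw [jacobiator, mul_comm (e b), hM.mul_eq_zero_of_not_col (hc b (Or.inr (Or.inl rfl))),
      hM.mul_eq_zero_of_not_col (hc a (Or.inl rfl)), hM.mul_eq_lineSum hS.toIsPTS hab,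
      hM.mul_lineSum_of_forall_not_col hc, mul_zero, mul_zero, add_zero, add_zero]

theorem jacobiator_eq_zero (a b c : P) : jacobiator (e a) (e b) (e c) = 0 := by
  by_cases hab : col a b
  · exact hM.jacobiator_of_col hS hab c
  by_cases hbc : col b c
  · rw [jacobiator_rotate]
    exact hM.jacobiator_of_col hS hbc a
  by_cases hca : col c a
  · rw [← jacobiator_rotate]
    exact hM.jacobiator_of_col hS hca b
  rw [jacobiator, hM.mul_eq_zero_of_not_col hab, hM.mul_eq_zero_of_not_col hbc,
    hM.mul_eq_zero_of_not_col hca, mul_zero, mul_zero, mul_zero, add_zero, add_zero]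

theorem lineSum_mul_lineSum_mul {x y : P} (hxy : col x y) (z : P) :
    lineSum e third x y * (lineSum e third x y * e z) = lineSum e third x y * e z := by
  rcases hS.line_trichotomy hxy z with hz | ⟨f, hf, a, b, c, rfl, rfl, rfl⟩ | hz
  · rw [mul_comm _ (e z), hM.mul_lineSum_of_mem hS.toIsPTS hxy hz, mul_zero]
  · have hab : CQPt.col a b := (hf.2.1 a b).1 hxy
    have hsum : lineSum (e ∘ f) CQPt.third a b = lineSum e third (f a) (f b) := by
      simp only [lineSum, Function.comp_apply, hf.2.2 a b hab]
    rw [← hsum]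
    exact (hM.comp_cqEmbedding hf).cq_lineSum_mul_lineSum_mul hab c
  · rw [mul_comm _ (e z), hM.mul_lineSum_of_forall_not_col hz, mul_zero]

end Symplectic
end IsNilMatsuo

section MatsuoBasis
variable {k A P : Type*} [CommRing k] [NonUnitalNonAssocCommRing A] [Module k A]
  [IsScalarTower k A A] [SMulCommClass k A A] {col : P → P → Prop} {third : P → P → P}
  (hS : IsSymplectic col third) {e : Module.Basis P k A} (hM : IsNilMatsuo k col third e)
  {p q : P}
include hS hM

omit [IsScalarTower k A A] in
theorem isIdempotentElem_mulLeft_lineSum (hpq : col p q) :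
    IsIdempotentElem (LinearMap.mulLeft k (lineSum e third p q)) :=
  e.ext fun i => hM.lineSum_mul_lineSum_mul hS hpq i

theorem lineSum_mul_mul (x y : A) :
    lineSum e third p q * (x * y) =
      lineSum e third p q * x * y + x * (lineSum e third p q * y) := by
  refine e.mul_mul_eq_add_of_forall _ (fun i j => ?_) x y
  have hleib (m : P) : e m * (e i * e j) = e m * e i * e j + e i * (e m * e j) :=
    mul_mul_eq_of_jacobiator_eq_zero hM.add_self (hM.jacobiator_eq_zero hS m i j)
  simp only [lineSum, add_mul, mul_add, hleib]
  abel

end MatsuoBasis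

theorem stmt17_general {k A P : Type*} [Field k] [NonUnitalNonAssocCommRing A]
    [Module k A] [SMulCommClass k A A] [IsScalarTower k A A]
    (col : P → P → Prop) (third : P → P → P)
    (hS : IsSymplectic col third)
    (e : Module.Basis P k A) (hM : IsNilMatsuo k col third ⇑e)
    (p q : P) (hpq : col p q)
    (A0 A1 : Submodule k A)
    (hA0 : A0 = Module.End.eigenspace
      (LinearMap.mulLeft k (e p + e q + e (third p q))) 0)
    (hA1 : A1 = Module.End.eigenspace
      (LinearMap.mulLeft k (e p + e q + e (third p q))) 1) :
    IsCompl A0 A1 ∧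
      (∀ u ∈ A0, ∀ v ∈ A0, u * v ∈ A0) ∧
      (∀ u ∈ A0, ∀ v ∈ A1, u * v ∈ A1) ∧
      (∀ u ∈ A1, ∀ v ∈ A1, u * v ∈ A0) := by
  rw [show e p + e q + e (third p q) = lineSum e third p q from rfl] at hA0 hA1
  subst hA0 hA1
  have hD := lineSum_mul_mul hS hM (p := p) (q := q)
  have h11 : (1 + 1 : k) = 0 := by rw [one_add_one_eq_two, hM.char2]
  refine ⟨isCompl_eigenspace_zero_one (isIdempotentElem_mulLeft_lineSum hS hM hpq),
    fun u hu v hv => ?_, fun u hu v hv => ?_, fun u hu v hv => ?_⟩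
  · simpa only [add_zero] using mul_mem_eigenspace_add_of_derivation hD hu hv
  · simpa only [zero_add] using mul_mem_eigenspace_add_of_derivation hD hu hv
  · simpa only [h11] using mul_mem_eigenspace_add_of_derivation hD hu hv

/-- Let `A` be the nilpotent Matsuo algebra of a Fischer space of symplectic type
(finite point set) over a field of characteristic 2. For each line ℓ (through the
collinear points `p, q`), `A` is the direct sum of the eigenspaces of `ad_{s_ℓ}` for
the eigenvalues 0 and 1, and this decomposition satisfies the `ℤ/2ℤ`-graded fusion
law: `A₀·A₀ ⊆ A₀`, `A₀·A₁ ⊆ A₁`, `A₁·A₁ ⊆ A₀`. -/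
theorem stmt17 {k A P : Type*} [Field k] [NonUnitalNonAssocCommRing A]
    [Module k A] [SMulCommClass k A A] [IsScalarTower k A A] [Fintype P]
    (col : P → P → Prop) (third : P → P → P)
    (hS : IsSymplectic col third)
    (e : Module.Basis P k A) (hM : IsNilMatsuo k col third ⇑e)
    (p q : P) (hpq : col p q)
    (A0 A1 : Submodule k A)
    (hA0 : A0 = Module.End.eigenspace
      (LinearMap.mulLeft k (e p + e q + e (third p q))) 0)
    (hA1 : A1 = Module.End.eigenspace
      (LinearMap.mulLeft k (e p + e q + e (third p q))) 1) :
    IsCompl A0 A1 ∧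
      (∀ u ∈ A0, ∀ v ∈ A0, u * v ∈ A0) ∧
      (∀ u ∈ A0, ∀ v ∈ A1, u * v ∈ A1) ∧
      (∀ u ∈ A1, ∀ v ∈ A1, u * v ∈ A0) :=
  stmt17_general col third hS e hM p q hpq A0 A1 hA0 hA1
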